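/- Let (φ_i)_{i≥1} be a sequence in SL(2,ℝ), φ_i = [[a_i, b_i],[c_i, d_i]], with c_i ≠ 0 for all i, and suppose the sequence (1/n)∑_{i=1}^n log|c_i| is bounded from below. Then the set of periods {τ ∈ (0, ∞) : the sequence (f^{(k)}(τ))_{k≥1} is bounded} has finite Lebesgue measure. -/

import Mathlib

open MeasureTheory

/-- The matrix `h^t = [[1, t],[0, 1]] ∈ SL(2,ℝ)`. -/
def hMat (t : ℝ) : Matrix (Fin 2) (Fin 2) ℝ := !![1, t; 0, 1]

/-- The kicked evolution `f^{(k)}(τ) = φ_k h^τ φ_{k-1} h^τ ⋯ φ_1 h^τ`. -/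
def kickedEvol (φ : ℕ → Matrix (Fin 2) (Fin 2) ℝ) (τ : ℝ) :
    ℕ → Matrix (Fin 2) (Fin 2) ℝ
  | 0 => 1
  | k + 1 => φ (k + 1) * hMat τ * kickedEvol φ τ k

/-- A sequence of matrices is bounded if all its entries are uniformly bounded
(equivalently, it lies in a compact subset). -/
def MatSeqBounded (f : ℕ → Matrix (Fin 2) (Fin 2) ℝ) : Prop :=
  ∃ C : ℝ, ∀ k : ℕ, 1 ≤ k → ∀ i j : Fin 2, |f k i j| ≤ C

/-!
The `(1,1)` entry of `f^{(k)}(τ)` is a polynomial in `τ` of degree `k` with leading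
coefficient `c_1 ⋯ c_k`, whose absolute value is at least `e^{k m}` by hypothesis. A real
polynomial of degree `n` with leading coefficient `ℓ` satisfies `|p| ≤ M` only on a set of
measure at most `2e (M / |ℓ|)^{1/n}`: on such a set `F` of measure `L`, the sum over the roots
`z` of `∫_F log |τ - Re z|` is at most `L log (M / |ℓ|)`, while each integral is at least its
value `L (log (L/2) - 1)` on the interval of length `L` centred at `Re z`. Choosing `n ≈ log M`
makes this bound independent of `M`, and the set of periods with bounded evolution is an
increasing union of such sublevel sets.
-/

open Polynomial Real Set

theorem setIntegral_le_setIntegral_of_measure_eq {α : Type*} [MeasurableSpace α]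
    {μ : Measure α} {f : α → ℝ} {s t : Set α} (c : ℝ) (hs : MeasurableSet s)
    (ht : MeasurableSet t) (hst : μ s = μ t) (hs_fin : μ s ≠ ⊤) (hfs : IntegrableOn f s μ)
    (hft : IntegrableOn f t μ) (h_le : ∀ᵐ x ∂μ, x ∈ s \ t → f x ≤ c)
    (h_ge : ∀ x ∈ t \ s, c ≤ f x) :
    ∫ x in s, f x ∂μ ≤ ∫ x in t, f x ∂μ := by
  have hdiff : μ.real (s \ t) = μ.real (t \ s) := by
    rw [measureReal_def, measureReal_def,
      measure_sdiff_symm hs.nullMeasurableSet ht.nullMeasurableSet hst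
        (measure_ne_top_of_subset inter_subset_left hs_fin)]
  have h_st : ∫ x in s \ t, f x ∂μ ≤ c * μ.real (s \ t) := by
    rw [mul_comm, ← smul_eq_mul, ← setIntegral_const]
    exact setIntegral_mono_on_ae (hfs.mono_set sdiff_subset)
      (integrableOn_const (measure_ne_top_of_subset sdiff_subset hs_fin)) (hs.diff ht) h_le
  have h_ts : c * μ.real (t \ s) ≤ ∫ x in t \ s, f x ∂μ :=
    setIntegral_ge_of_const_le_real (ht.diff hs)
      (measure_ne_top_of_subset sdiff_subset (hst ▸ hs_fin)) h_ge (hft.mono_set sdiff_subset)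
  rw [hdiff] at h_st
  rw [← integral_inter_add_sdiff ht hfs, ← integral_inter_add_sdiff hs hft, inter_comm]
  linarith

theorem integral_log_abs_sub_ball (y : ℝ) {r : ℝ} (hr : 0 ≤ r) :
    ∫ τ in Metric.ball y r, log |τ - y| = 2 * r * (log r - 1) := by
  rw [Real.ball_eq_Ioo, ← integral_Ioc_eq_integral_Ioo,
    ← intervalIntegral.integral_of_le (by linarith),
    intervalIntegral.integral_comp_sub_right (fun t => log |t|)]
  simp only [log_abs, sub_sub_cancel_left, add_sub_cancel_left, integral_log, log_neg_eq_log]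
  ring

theorem integrableOn_log_abs_sub (y : ℝ) {s : Set ℝ} (hs : Bornology.IsBounded s) :
    IntegrableOn (fun τ => log |τ - y|) s := by
  obtain ⟨R, hR0, hR⟩ := hs.subset_closedBall_lt 0 y
  rw [Real.closedBall_eq_Icc] at hR
  refine IntegrableOn.mono_set ?_ hR
  have := (intervalIntegral.intervalIntegrable_log' (a := -R) (b := R)).comp_sub_right y
  rw [intervalIntegrable_iff_integrableOn_Icc_of_le (by linarith)] at this
  simpa only [log_abs, neg_add_eq_sub, add_comm R] using this

theorem setIntegral_log_abs_sub_ge {F : Set ℝ} (hF : MeasurableSet F)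
    (hFb : Bornology.IsBounded F) (y : ℝ) (hL : 0 < volume.real F) :
    volume.real F * (log (volume.real F / 2) - 1) ≤ ∫ τ in F, log |τ - y| := by
  set L := volume.real F
  set r := L / 2
  have hr : 0 < r := by positivity
  have hvol : volume (Metric.ball y r) = volume F := by
    rw [Real.volume_ball, ← ofReal_measureReal hFb.measure_lt_top.ne]
    congr 1; ring
  have h_le : ∀ᵐ τ, τ ∈ Metric.ball y r \ F → log |τ - y| ≤ log r := by
    filter_upwards [measure_eq_zero_iff_ae_notMem.mp (measure_singleton y)] with τ hτy hτ
    refine log_le_log (abs_pos.mpr (sub_ne_zero.mpr hτy)) ?_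
    exact (Real.dist_eq τ y ▸ Metric.mem_ball.mp hτ.1).le
  have h_ge : ∀ τ ∈ F \ Metric.ball y r, log r ≤ log |τ - y| := fun τ hτ =>
    log_le_log hr (by simpa [Real.dist_eq] using hτ.2)
  calc L * (log (L / 2) - 1) = ∫ τ in Metric.ball y r, log |τ - y| := by
        rw [integral_log_abs_sub_ball y hr.le]; ring
    _ ≤ ∫ τ in F, log |τ - y| :=
        setIntegral_le_setIntegral_of_measure_eq (log r) measurableSet_ball hF hvol
          measure_ball_lt_top.ne (integrableOn_log_abs_sub y Metric.isBounded_ball)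
          (integrableOn_log_abs_sub y hFb) h_le h_ge

theorem volume_le_of_prod_abs_sub_le {ι : Type*} [Fintype ι] [Nonempty ι] (x : ι → ℝ)
    {X : ℝ} (hX : 0 < X) {F : Set ℝ} (hF : MeasurableSet F) (hFb : Bornology.IsBounded F)
    (hFx : ∀ τ ∈ F, ∏ i, |τ - x i| ≤ X ^ Fintype.card ι) :
    volume F ≤ ENNReal.ofReal (2 * exp 1 * X) := by
  set L := volume.real F
  set n : ℝ := (Fintype.card ι : ℝ)
  rw [← ofReal_measureReal hFb.measure_lt_top.ne]
  refine ENNReal.ofReal_le_ofReal ?_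
  rcases measureReal_nonneg.eq_or_lt with hL | hL
  · rw [← hL]; positivity
  have hn : 0 < n := by positivity
  have hint : ∀ i ∈ Finset.univ, IntegrableOn (fun τ => log |τ - x i|) F :=
    fun i _ => integrableOn_log_abs_sub (x i) hFb
  -- `log 0 = 0`, so the bound on `∑ i, log |τ - x i|` below only holds off the points `x i`.
  have h_off : ∀ᵐ τ, τ ∉ range x :=
    measure_eq_zero_iff_ae_notMem.mp ((finite_range x).measure_zero volume)
  have h_sum_le : ∀ᵐ τ, τ ∈ F → ∑ i, log |τ - x i| ≤ n * log X := by
    filter_upwards [h_off] with τ hτx hτ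
    have hpos : ∀ i ∈ Finset.univ, |τ - x i| ≠ 0 := fun i _ =>
      abs_ne_zero.mpr (sub_ne_zero.mpr fun h => hτx ⟨i, h.symm⟩)
    rw [← log_prod hpos, ← log_pow]
    exact log_le_log (Finset.prod_pos fun i hi => (abs_nonneg _).lt_of_ne' (hpos i hi))
      (hFx τ hτ)
  have key : n * (L * (log (L / 2) - 1)) ≤ n * (L * log X) :=
    calc n * (L * (log (L / 2) - 1)) ≤ ∑ i, ∫ τ in F, log |τ - x i| := by
          rw [← nsmul_eq_mul, ← Finset.card_univ, ← Finset.sum_const]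
          exact Finset.sum_le_sum fun i _ => setIntegral_log_abs_sub_ge hF hFb (x i) hL
      _ = ∫ τ in F, ∑ i, log |τ - x i| := (integral_finsetSum _ hint).symm
      _ ≤ ∫ τ in F, n * log X :=
          setIntegral_mono_on_ae (integrable_finsetSum _ hint)
            (integrableOn_const hFb.measure_lt_top.ne) hF h_sum_le
      _ = n * (L * log X) := by rw [setIntegral_const, smul_eq_mul]; ring
  have hlog : log (L / 2) ≤ log (exp 1 * X) := by
    rw [log_mul (exp_pos 1).ne' hX.ne', log_exp]
    linarith [le_of_mul_le_mul_left (le_of_mul_le_mul_left key hn) hL]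
  linarith [(log_le_log_iff (by positivity) (by positivity)).mp hlog]

theorem volume_setOf_prod_abs_sub_le {ι : Type*} [Fintype ι] [Nonempty ι] (x : ι → ℝ)
    {X : ℝ} (hX : 0 < X) :
    volume {τ | ∏ i, |τ - x i| ≤ X ^ Fintype.card ι} ≤ ENNReal.ofReal (2 * exp 1 * X) := by
  set S := {τ | ∏ i, |τ - x i| ≤ X ^ Fintype.card ι}
  have hS : MeasurableSet S := measurableSet_le (by fun_prop) measurable_const
  have hmono : Monotone fun R : ℕ => S ∩ Icc (-R : ℝ) R := fun R R' h =>
    inter_subset_inter_right _ (Icc_subset_Icc (by simpa using h) (by simpa using h))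
  have hcover : S = ⋃ R : ℕ, S ∩ Icc (-R : ℝ) R := by
    rw [← inter_iUnion, eq_comm, inter_eq_left]
    intro τ _
    obtain ⟨R, hR⟩ := exists_nat_ge |τ|
    exact mem_iUnion.mpr ⟨R, abs_le.mp hR⟩
  rw [hcover, hmono.measure_iUnion]
  exact iSup_le fun R => volume_le_of_prod_abs_sub_le x hX (hS.inter measurableSet_Icc)
    ((Metric.isBounded_Icc (-R : ℝ) R).subset inter_subset_right) fun τ hτ => hτ.1

theorem abs_eval_eq_leadingCoeff_mul_prod_roots (p : ℝ[X]) (τ : ℝ) :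
    |p.eval τ| =
      |p.leadingCoeff| * ∏ z : (p.map (algebraMap ℝ ℂ)).roots, ‖(τ : ℂ) - z‖ := by
  have h := (IsAlgClosed.splits (p.map (algebraMap ℝ ℂ))).eval_eq_prod_roots τ
  rw [eval_map_algebraMap, ← Complex.coe_algebraMap, aeval_algebraMap_apply_eq_algebraMap_eval,
    leadingCoeff_map_of_injective (algebraMap ℝ ℂ).injective] at h
  rw [← norm_prod, Finset.prod_eq_multiset_prod, Multiset.map_univ (f := fun z => (τ : ℂ) - z)]
  simpa using congrArg (‖·‖) h

theorem volume_setOf_abs_eval_le (p : ℝ[X]) (hp : 0 < p.natDegree) {M X : ℝ} (hX : 0 < X)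
    (hMX : M ≤ |p.leadingCoeff| * X ^ p.natDegree) :
    volume {τ | |p.eval τ| ≤ M} ≤ ENNReal.ofReal (2 * exp 1 * X) := by
  set roots := (p.map (algebraMap ℝ ℂ)).roots
  have hcard : Fintype.card roots = p.natDegree := by
    rw [Multiset.card_coe, IsAlgClosed.card_roots_eq_natDegree, natDegree_map]
  have : Nonempty roots := Fintype.card_pos_iff.mp (hcard ▸ hp)
  have hlead : 0 < |p.leadingCoeff| :=
    abs_pos.mpr (leadingCoeff_ne_zero.mpr (ne_zero_of_natDegree_gt hp))
  refine (measure_mono fun τ (hτ : |p.eval τ| ≤ M) => ?_).trans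
    (volume_setOf_prod_abs_sub_le (fun z : roots => (z : ℂ).re) hX)
  change ∏ z : roots, |τ - (z : ℂ).re| ≤ X ^ Fintype.card roots
  rw [hcard]
  refine le_of_mul_le_mul_left ?_ hlead
  calc |p.leadingCoeff| * ∏ z : roots, |τ - (z : ℂ).re|
      ≤ |p.leadingCoeff| * ∏ z : roots, ‖(τ : ℂ) - z‖ := by
        gcongr with z
        simpa using Complex.abs_re_le_norm ((τ : ℂ) - z)
    _ = |p.eval τ| := (abs_eval_eq_leadingCoeff_mul_prod_roots p τ).symm
    _ ≤ |p.leadingCoeff| * X ^ p.natDegree := hτ.trans hMX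

theorem volume_setOf_forall_abs_eval_le (P : ℕ → ℝ[X]) (m : ℝ)
    (hdeg : ∀ k, 1 ≤ k → (P k).natDegree = k)
    (hlead : ∀ k, 1 ≤ k → k * m ≤ log |(P k).leadingCoeff|) {M : ℝ} (hM : 0 < M) :
    volume {τ | ∀ k, 1 ≤ k → |(P k).eval τ| ≤ M} ≤
      ENNReal.ofReal (2 * exp 1 * exp (1 - m)) := by
  set k := ⌈log M⌉₊ + 1
  have hk : 1 ≤ k := Nat.le_add_left 1 _
  have hlogM : log M ≤ k := by
    have := Nat.le_ceil (log M); push_cast [k]; linarith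
  have hdegk : 0 < (P k).natDegree := (hdeg k hk).symm ▸ hk
  have hpos : 0 < |(P k).leadingCoeff| :=
    abs_pos.mpr (leadingCoeff_ne_zero.mpr (ne_zero_of_natDegree_gt hdegk))
  refine (measure_mono fun τ (hτ : ∀ k, 1 ≤ k → |(P k).eval τ| ≤ M) => hτ k hk).trans
    (volume_setOf_abs_eval_le (P k) hdegk (exp_pos _) ?_)
  calc M = exp (log M) := (exp_log hM).symm
    _ ≤ exp (log |(P k).leadingCoeff| + k * (1 - m)) := by
        gcongr; linarith [hlead k hk]
    _ = |(P k).leadingCoeff| * exp (1 - m) ^ (P k).natDegree := by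
        rw [exp_add, exp_log hpos, exp_nat_mul, hdeg k hk]

theorem volume_setOf_bounded_eval_le (P : ℕ → ℝ[X]) (m : ℝ)
    (hdeg : ∀ k, 1 ≤ k → (P k).natDegree = k)
    (hlead : ∀ k, 1 ≤ k → k * m ≤ log |(P k).leadingCoeff|) :
    volume {τ | ∃ M, ∀ k, 1 ≤ k → |(P k).eval τ| ≤ M} ≤
      ENNReal.ofReal (2 * exp 1 * exp (1 - m)) := by
  set S := fun N : ℕ => {τ | ∀ k, 1 ≤ k → |(P k).eval τ| ≤ N + 1}
  have hS : Monotone S := fun N N' hN τ hτ k hk => (hτ k hk).trans (by gcongr)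
  have hcover : {τ | ∃ M, ∀ k, 1 ≤ k → |(P k).eval τ| ≤ M} ⊆ ⋃ N, S N := by
    rintro τ ⟨M, hM⟩
    obtain ⟨N, hN⟩ := exists_nat_ge M
    exact mem_iUnion.mpr ⟨N, fun k hk => by linarith [hM k hk]⟩
  calc _ ≤ volume (⋃ N, S N) := measure_mono hcover
    _ = ⨆ N, volume (S N) := hS.measure_iUnion
    _ ≤ _ := iSup_le fun N => volume_setOf_forall_abs_eval_le P m hdeg hlead (by positivity)

theorem Matrix.natDegree_mul_apply_le {R : Type*} [Semiring R] {l m n : Type*} [Fintype m]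
    {A : Matrix l m R[X]} {B : Matrix m n R[X]} {p q : ℕ} (hA : ∀ i j, (A i j).natDegree ≤ p)
    (hB : ∀ i j, (B i j).natDegree ≤ q) (i : l) (j : n) : ((A * B) i j).natDegree ≤ p + q :=
  natDegree_sum_le_of_forall_le _ _ fun k _ => natDegree_mul_le_of_le (hA i k) (hB k j)

noncomputable def kickedEvolPoly (φ : ℕ → Matrix (Fin 2) (Fin 2) ℝ) :
    ℕ → Matrix (Fin 2) (Fin 2) ℝ[X]
  | 0 => 1
  | k + 1 => (φ (k + 1)).map C * !![1, X; 0, 1] * kickedEvolPoly φ k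

section KickedEvolPoly

variable (φ : ℕ → Matrix (Fin 2) (Fin 2) ℝ)

theorem kickedEvolPoly_map_eval (τ : ℝ) (k : ℕ) :
    (kickedEvolPoly φ k).map (eval τ) = kickedEvol φ τ k := by
  rw [← coe_evalRingHom]
  induction k with
  | zero => simp [kickedEvolPoly, kickedEvol]
  | succ k ih =>
    rw [kickedEvolPoly, kickedEvol, Matrix.map_mul, Matrix.map_mul, ih, Matrix.map_map]
    congr 2
    · ext i j; simp
    · ext i j; fin_cases i <;> fin_cases j <;> simp [hMat]

theorem natDegree_kickedEvolPoly_le (k : ℕ) (i j : Fin 2) :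
    (kickedEvolPoly φ k i j).natDegree ≤ k := by
  induction k generalizing i j with
  | zero => simp [kickedEvolPoly, Matrix.one_apply, apply_ite]
  | succ k ih =>
    have hkick : ∀ i j, (((φ (k + 1)).map C * !![1, X; 0, 1] : Matrix _ _ ℝ[X]) i j).natDegree
        ≤ 0 + 1 :=
      Matrix.natDegree_mul_apply_le (fun _ _ => (natDegree_C _).le)
        (fun i j => by fin_cases i <;> fin_cases j <;> simp)
    have := Matrix.natDegree_mul_apply_le hkick ih i j
    rw [kickedEvolPoly]
    omega

theorem coeff_kickedEvolPoly_one_one (k : ℕ) :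
    (kickedEvolPoly φ k 1 1).coeff k = ∏ i ∈ Finset.Icc 1 k, φ i 1 0 := by
  induction k with
  | zero => simp [kickedEvolPoly]
  | succ k ih =>
    set M := kickedEvolPoly φ k
    have hentry : kickedEvolPoly φ (k + 1) 1 1 =
        C (φ (k + 1) 1 0) * (M 0 1 + X * M 1 1) + C (φ (k + 1) 1 1) * M 1 1 := by
      simp [kickedEvolPoly, M, Matrix.mul_apply, Fin.sum_univ_two]
      ring
    have hM : ∀ i, (M i 1).coeff (k + 1) = 0 := fun i =>
      coeff_eq_zero_of_natDegree_lt (Nat.lt_succ_of_le (natDegree_kickedEvolPoly_le φ k i 1))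
    rw [hentry, coeff_add, coeff_C_mul, coeff_C_mul, coeff_add, coeff_X_mul, hM, hM, ih,
      Finset.prod_Icc_succ_top (by omega)]
    ring

theorem natDegree_kickedEvolPoly_one_one (k : ℕ)
    (hφ : ∀ i ∈ Finset.Icc 1 k, φ i 1 0 ≠ 0) :
    (kickedEvolPoly φ k 1 1).natDegree = k :=
  natDegree_eq_of_le_of_coeff_ne_zero (natDegree_kickedEvolPoly_le φ k 1 1)
    (coeff_kickedEvolPoly_one_one φ k ▸ Finset.prod_ne_zero_iff.mpr hφ)

theorem leadingCoeff_kickedEvolPoly_one_one (k : ℕ)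
    (hφ : ∀ i ∈ Finset.Icc 1 k, φ i 1 0 ≠ 0) :
    (kickedEvolPoly φ k 1 1).leadingCoeff = ∏ i ∈ Finset.Icc 1 k, φ i 1 0 := by
  rw [leadingCoeff, natDegree_kickedEvolPoly_one_one φ k hφ, coeff_kickedEvolPoly_one_one]

end KickedEvolPoly

theorem stmt_10_general (a b c d : ℕ → ℝ)
    (hc : ∀ i : ℕ, 1 ≤ i → c i ≠ 0)
    (hlog : ∃ m : ℝ, ∀ n : ℕ, 1 ≤ n →
      m ≤ (1 / (n : ℝ)) * ∑ i ∈ Finset.Icc 1 n, Real.log |c i|)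
    (φ : ℕ → Matrix (Fin 2) (Fin 2) ℝ)
    (hφ : ∀ i : ℕ, 1 ≤ i → φ i = !![a i, b i; c i, d i]) :
    volume {τ : ℝ | τ ∈ Set.Ioi (0 : ℝ) ∧ MatSeqBounded (kickedEvol φ τ)} < ⊤ := by
  obtain ⟨m, hm⟩ := hlog
  set P := fun k => kickedEvolPoly φ k 1 1
  have hφc : ∀ k, ∀ i ∈ Finset.Icc 1 k, φ i 1 0 = c i := fun k i hi => by
    simp [hφ i (Finset.mem_Icc.mp hi).1]
  have hφ0 : ∀ k, ∀ i ∈ Finset.Icc 1 k, φ i 1 0 ≠ 0 := fun k i hi =>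
    hφc k i hi ▸ hc i (Finset.mem_Icc.mp hi).1
  have hlead : ∀ k, 1 ≤ k → k * m ≤ log |(P k).leadingCoeff| := by
    intro k hk
    rw [leadingCoeff_kickedEvolPoly_one_one φ k (hφ0 k), Finset.abs_prod,
      log_prod fun i hi => abs_ne_zero.mpr (hφ0 k i hi), Finset.sum_congr rfl fun i hi => by
        rw [hφc k i hi]]
    calc k * m ≤ k * ((1 / k) * ∑ i ∈ Finset.Icc 1 k, log |c i|) := by gcongr; exact hm k hk
      _ = ∑ i ∈ Finset.Icc 1 k, log |c i| := by field_simp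
  have hsub : {τ : ℝ | τ ∈ Set.Ioi (0 : ℝ) ∧ MatSeqBounded (kickedEvol φ τ)} ⊆
      {τ | ∃ M, ∀ k, 1 ≤ k → |(P k).eval τ| ≤ M} := by
    rintro τ ⟨-, C, hC⟩
    refine ⟨C, fun k hk => ?_⟩
    have := hC k hk 1 1
    rwa [← kickedEvolPoly_map_eval] at this
  have hdeg : ∀ k, 1 ≤ k → (P k).natDegree = k := fun k _ =>
    natDegree_kickedEvolPoly_one_one φ k (hφ0 k)
  calc volume _
      ≤ volume {τ | ∃ M, ∀ k, 1 ≤ k → |(P k).eval τ| ≤ M} := measure_mono hsub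
    _ ≤ ENNReal.ofReal (2 * exp 1 * exp (1 - m)) :=
        volume_setOf_bounded_eval_le P m hdeg hlead
    _ < ⊤ := ENNReal.ofReal_lt_top

/-- if the kicks `φ_i = [[a_i, b_i],[c_i, d_i]] ∈ SL(2,ℝ)` have `c_i ≠ 0`
and the averages `(1/n) ∑_{i=1}^n log |c_i|` are bounded below, then the set of periods
`τ > 0` for which the kicked evolution is bounded has finite Lebesgue measure. -/
theorem stmt_10 (a b c d : ℕ → ℝ)
    (hdet : ∀ i : ℕ, 1 ≤ i → a i * d i - b i * c i = 1)
    (hc : ∀ i : ℕ, 1 ≤ i → c i ≠ 0)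
    (hlog : ∃ m : ℝ, ∀ n : ℕ, 1 ≤ n →
      m ≤ (1 / (n : ℝ)) * ∑ i ∈ Finset.Icc 1 n, Real.log |c i|)
    (φ : ℕ → Matrix (Fin 2) (Fin 2) ℝ)
    (hφ : ∀ i : ℕ, 1 ≤ i → φ i = !![a i, b i; c i, d i]) :
    volume {τ : ℝ | τ ∈ Set.Ioi (0 : ℝ) ∧ MatSeqBounded (kickedEvol φ τ)} < ⊤ :=
  stmt_10_general a b c d hc hlog φ hφ
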